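/- Let {G_i}_{i≥0} be a group chain in a group G acting on its inverse limit G_∞, let K = ⋂_{i≥0} G_i be the kernel of the chain, and let L = ⋂_{g ∈ G} g K g^{-1} be the normal core of K in G. Then: (a) an element h ∈ G fixes every point of G_∞ if and only if h ∈ L; equivalently, L = ⋂_{i≥0} C_i where C_i = ⋂_{g ∈ G} g G_i g^{-1}, so that the induced action of G/L on G_∞ is effective; and (b) if the discriminant group D_x is trivial, then any g ∈ G fixing some point of G_∞ lies in L, so the action of G/L on G_∞ is free and K = L. -/
import Mathlib


namespace CantorChains

variable {G : Type*} [Group G]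

/-- The map between left coset spaces induced by an inclusion of subgroups. -/
def cosetMap {H K : Subgroup G} (h : H ≤ K) : G ⧸ H → G ⧸ K :=
  Quotient.map' id fun a b hab => by
    rw [QuotientGroup.leftRel_apply] at hab ⊢
    exact h hab

@[simp] lemma cosetMap_mk {H K : Subgroup G} (h : H ≤ K) (a : G) :
    cosetMap h (QuotientGroup.mk a) = QuotientGroup.mk a := rfl

instance (H : Subgroup G) : TopologicalSpace (G ⧸ H) := ⊥
instance (H : Subgroup G) : DiscreteTopology (G ⧸ H) := ⟨rfl⟩

lemma cosetMap_smul {H K : Subgroup G} (h : H ≤ K) (g : G) (q : G ⧸ H) :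
    cosetMap h (g • q) = g • cosetMap h q := by
  induction q using Quotient.inductionOn' with
  | h a => rfl

/-- The inverse limit of the coset spaces of a (nested) family of subgroups. -/
def InvLim (V : ℕ → Subgroup G) : Type _ :=
  {u : ∀ i, G ⧸ V i // ∀ i j, i ≤ j → ∀ hle : V j ≤ V i, cosetMap hle (u j) = u i}

instance (V : ℕ → Subgroup G) : TopologicalSpace (InvLim V) :=
  instTopologicalSpaceSubtype

/-- The natural left `G`-action on the inverse limit. -/
instance (V : ℕ → Subgroup G) : MulAction G (InvLim V) where
  smul g u := ⟨fun i => g • u.1 i, fun i j hij hle => by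
    rw [cosetMap_smul, u.2 i j hij hle]⟩
  one_smul u := Subtype.ext (funext fun i => one_smul _ _)
  mul_smul a b u := Subtype.ext (funext fun i => mul_smul a b (u.1 i))

lemma smul_coord (V : ℕ → Subgroup G) (g : G) (u : InvLim V) (i : ℕ) :
    (g • u).1 i = g • u.1 i := rfl

/-- The canonical basepoint `(eG_i)` of the inverse limit. -/
def basepoint (V : ℕ → Subgroup G) : InvLim V :=
  ⟨fun _ => QuotientGroup.mk 1, fun _ _ _ _ => rfl⟩

/-- A group chain: a properly descending chain of finite index subgroups,
starting at the full group. -/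
structure GroupChain (G : Type*) [Group G] where
  sub : ℕ → Subgroup G
  sub_zero : sub 0 = ⊤
  sub_lt : ∀ i, sub (i + 1) < sub i
  finiteIndex : ∀ i, (sub i).FiniteIndex

lemma GroupChain.antitone (C : GroupChain G) : Antitone C.sub :=
  antitone_nat_of_succ_le fun i => (C.sub_lt i).le

/-- Equivalence of group chains: some interleaving of subsequences is again a chain. -/
def ChainEquiv (Gc Hc : GroupChain G) : Prop :=
  ∃ (Kc : GroupChain G) (a b : ℕ → ℕ), StrictMono a ∧ StrictMono b ∧
    (∀ k, Kc.sub (2 * k) = Gc.sub (a k)) ∧ (∀ k, Kc.sub (2 * k + 1) = Hc.sub (b k))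

/-- The conjugate `g H g⁻¹` of a subgroup. -/
def conjSubgroup (g : G) (H : Subgroup G) : Subgroup G :=
  H.map (MulAut.conj g).toMonoidHom

/-- Conjugate equivalence of group chains. -/
def ChainConjEquiv (Gc Hc : GroupChain G) : Prop :=
  ∃ g : ℕ → G,
    (∀ i j, i ≤ j → (QuotientGroup.mk (g j) : G ⧸ Gc.sub i) = QuotientGroup.mk (g i)) ∧
    ∃ (Kc : GroupChain G) (a b : ℕ → ℕ), StrictMono a ∧ StrictMono b ∧
      (∀ k, Kc.sub (2 * k) = conjSubgroup (g (a k)) (Gc.sub (a k))) ∧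
      (∀ k, Kc.sub (2 * k + 1) = Hc.sub (b k))

lemma cosetMap_mul {N M : Subgroup G} [N.Normal] [M.Normal] (h : N ≤ M) (q r : G ⧸ N) :
    cosetMap h (q * r) = cosetMap h q * cosetMap h r := by
  induction q using Quotient.inductionOn' with
  | h a =>
    induction r using Quotient.inductionOn' with
    | h b => rfl

lemma cosetMap_inv {N M : Subgroup G} [N.Normal] [M.Normal] (h : N ≤ M) (q : G ⧸ N) :
    cosetMap h q⁻¹ = (cosetMap h q)⁻¹ := by
  induction q using Quotient.inductionOn' with
  | h a => rfl

/-- The inverse limit of the quotient groups `A ⧸ N i`, as a subgroup of the product. -/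
def quotLim {A : Type*} [Group A] (N : ℕ → Subgroup A) [∀ i, (N i).Normal] :
    Subgroup (∀ i, A ⧸ N i) where
  carrier := {u | ∀ i j, i ≤ j → ∀ hle : N j ≤ N i, cosetMap hle (u j) = u i}
  one_mem' := fun _ _ _ _ => rfl
  mul_mem' := fun {a b} ha hb i j hij hle => by
    show cosetMap hle (a j * b j) = a i * b i
    rw [cosetMap_mul, ha i j hij hle, hb i j hij hle]
  inv_mem' := fun {a} ha i j hij hle => by
    show cosetMap hle (a j)⁻¹ = (a i)⁻¹
    rw [cosetMap_inv, ha i j hij hle]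

variable (V : ℕ → Subgroup G)

/-- The limit core `C_∞ = lim← G ⧸ C_i` of a chain of subgroups. -/
def limitCore : Subgroup (∀ i, G ⧸ (V i).normalCore) :=
  quotLim fun i => (V i).normalCore

/-- The discriminant group `D_x = lim← G_i ⧸ C_i` of a chain of subgroups. -/
def discriminant : Subgroup (∀ i, G ⧸ (V i).normalCore) where
  carrier := {u | u ∈ limitCore V ∧ ∀ i, ∃ g ∈ V i, QuotientGroup.mk g = u i}
  one_mem' := ⟨(limitCore V).one_mem, fun i => ⟨1, (V i).one_mem, rfl⟩⟩
  mul_mem' := fun {a b} ha hb => ⟨mul_mem ha.1 hb.1, fun i => by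
    obtain ⟨g, hg, hga⟩ := ha.2 i
    obtain ⟨h, hh, hhb⟩ := hb.2 i
    exact ⟨g * h, mul_mem hg hh, by rw [Pi.mul_apply, ← hga, ← hhb]; rfl⟩⟩
  inv_mem' := fun {a} ha => ⟨inv_mem ha.1, fun i => by
    obtain ⟨g, hg, hga⟩ := ha.2 i
    exact ⟨g⁻¹, inv_mem hg, by rw [Pi.inv_apply, ← hga]; rfl⟩⟩

lemma discriminant_le_limitCore : discriminant V ≤ limitCore V := fun _ hu => hu.1

/-- The natural homomorphism `ι : G → ∏ G ⧸ C_i`. -/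
def iotaPi : G →* ∀ i, G ⧸ (V i).normalCore :=
  MonoidHom.mk' (fun g i => QuotientGroup.mk g) fun _ _ => rfl

lemma iotaPi_mem_limitCore (g : G) : iotaPi V g ∈ limitCore V :=
  fun _ _ _ _ => rfl

/-- The natural homomorphism `ι : G → C_∞` into the limit core. -/
def iotaC : G →* ↥(limitCore V) :=
  (iotaPi V).codRestrict _ (iotaPi_mem_limitCore V)

end CantorChains

namespace CantorChains

section Aux

variable {G : Type*} [Group G]

lemma mem_conjSubgroup {K : Subgroup G} {g h : G} :
    h ∈ conjSubgroup g K ↔ g⁻¹ * h * g ∈ K := by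
  simp only [conjSubgroup, Subgroup.mem_map, MulEquiv.coe_toMonoidHom, MulAut.conj_apply]
  constructor
  · rintro ⟨x, hx, rfl⟩
    have : g⁻¹ * (g * x * g⁻¹) * g = x := by group
    rwa [this]
  · intro hk
    exact ⟨g⁻¹ * h * g, hk, by group⟩

lemma exists_ultralimit {α β : Type*} [Finite β] (U : Ultrafilter α) (f : α → β) :
    ∃ b, {a | f a = b} ∈ U := by
  obtain ⟨b, hb⟩ := (U.map f).eq_pure_of_finite
  refine ⟨b, ?_⟩
  have h1 : {b} ∈ U.map f := by rw [hb]; exact Filter.mem_pure.mpr rfl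
  have h2 : f ⁻¹' {b} ∈ U := Ultrafilter.mem_map.mp h1
  simpa [Set.preimage, Set.mem_singleton_iff] using h2

/-- If the discriminant group is trivial, the chain subgroups eventually drop into
every normal core `C_i`. -/
lemma exists_le_normalCore (V : ℕ → Subgroup G) (hanti : Antitone V)
    [hfin : ∀ i, Finite (G ⧸ (V i).normalCore)]
    (hD : discriminant V = ⊥) (i : ℕ) : ∃ j, V j ≤ (V i).normalCore := by
  by_contra hcon
  push_neg at hcon
  choose v hvV hvC using fun j => SetLike.not_le_iff_exists.mp (hcon j)
  set U : Ultrafilter ℕ := Filter.hyperfilter ℕ with hU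
  -- define the limit element
  have hex : ∀ k : ℕ, ∃ b : G ⧸ (V k).normalCore,
      {j | (QuotientGroup.mk (v j) : G ⧸ (V k).normalCore) = b} ∈ U :=
    fun k => exists_ultralimit U _
  choose w hw using hex
  have hge : ∀ k : ℕ, {j | k ≤ j} ∈ U := by
    intro k
    apply Filter.mem_hyperfilter_of_finite_compl
    have : {j | k ≤ j}ᶜ ⊆ Set.Iio k := by
      intro x hx
      simp only [Set.mem_compl_iff, Set.mem_setOf_eq, not_le] at hx
      exact hx
    exact (Set.finite_Iio k).subset this
  have hwD : w ∈ discriminant V := by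
    constructor
    · -- coherence
      intro k l hkl hle
      have hmem : {j | (QuotientGroup.mk (v j) : G ⧸ (V l).normalCore) = w l} ∩
          {j | (QuotientGroup.mk (v j) : G ⧸ (V k).normalCore) = w k} ∈ U :=
        Filter.inter_mem (hw l) (hw k)
      obtain ⟨j, hj1, hj2⟩ := Ultrafilter.nonempty_of_mem hmem
      calc cosetMap hle (w l) = cosetMap hle (QuotientGroup.mk (v j)) := by rw [hj1]
        _ = QuotientGroup.mk (v j) := rfl
        _ = w k := hj2
    · -- components in V k
      intro k
      have hmem : ({j | k ≤ j} ∩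
          {j | (QuotientGroup.mk (v j) : G ⧸ (V k).normalCore) = w k}) ∈ U :=
        Filter.inter_mem (hge k) (hw k)
      obtain ⟨j, hj1, hj2⟩ := Ultrafilter.nonempty_of_mem hmem
      exact ⟨v j, hanti hj1 (hvV j), hj2⟩
  rw [hD, Subgroup.mem_bot] at hwD
  obtain ⟨j, hj⟩ := Ultrafilter.nonempty_of_mem (hw i)
  have : (QuotientGroup.mk (v j) : G ⧸ (V i).normalCore) = 1 := by
    rw [hj, hwD]; rfl
  exact hvC j ((QuotientGroup.eq_one_iff (v j)).mp this)

end Aux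

/-- Let `K = ⋂ G_i` be the kernel of a group chain and
`L = ⋂_{g} g K g⁻¹` its normal core. Then (a) an element of `G` acts trivially on the
inverse limit `G_∞` if and only if it lies in `L`, and `L = ⋂ C_i`; so the induced
action of `G/L` is effective. (b) If the discriminant group is trivial, then every
element of `G` fixing some point of `G_∞` lies in `L` (the action of `G/L` is free),
and `K = L`. -/
theorem kernel_core_effective_free {G : Type*} [Group G] (Gc : GroupChain G)
    (K L : Subgroup G)
    (hK : K = ⨅ i, Gc.sub i)
    (hL : L = ⨅ g : G, conjSubgroup g K) :
    (∀ h : G, (∀ u : InvLim Gc.sub, h • u = u) ↔ h ∈ L) ∧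
    (L = ⨅ i, (Gc.sub i).normalCore) ∧
    (discriminant Gc.sub = ⊥ →
      (∀ g : G, (∃ u : InvLim Gc.sub, g • u = u) → g ∈ L) ∧ K = L) := by
  -- L = ⨅ i, normalCore (G i)
  have hLC : L = ⨅ i, (Gc.sub i).normalCore := by
    subst hK hL
    ext h
    simp only [Subgroup.mem_iInf, mem_conjSubgroup]
    constructor
    · intro hh i b
      have := hh b⁻¹ i
      simpa using this
    · intro hh g i
      have := hh i g⁻¹
      simpa using this
  have hcoord : ∀ (g : G) (u : InvLim Gc.sub) (i : ℕ),
      g • u = u → (g • u.1 i : G ⧸ Gc.sub i) = u.1 i := by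
    intro g u i hgu
    have : (g • u).1 i = u.1 i := by rw [hgu]
    exact this
  have hLmem : ∀ h : G, h ∈ L ↔ ∀ i, h ∈ (Gc.sub i).normalCore := by
    intro h; rw [hLC]; exact Subgroup.mem_iInf
  refine ⟨?_, hLC, ?_⟩
  · -- part (a)
    intro h
    constructor
    · intro hfix
      rw [hLmem]
      intro i b
      -- apply to the constant point at b⁻¹
      set u : InvLim Gc.sub := ⟨fun _ => QuotientGroup.mk b⁻¹, fun _ _ _ _ => rfl⟩ with hu
      have := hcoord h u i (hfix u)
      have h2 : (QuotientGroup.mk (h * b⁻¹) : G ⧸ Gc.sub i) = QuotientGroup.mk b⁻¹ := this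
      have h3 : (h * b⁻¹)⁻¹ * b⁻¹ ∈ Gc.sub i := QuotientGroup.eq.mp h2
      have h4 : ((h * b⁻¹)⁻¹ * b⁻¹)⁻¹ ∈ Gc.sub i := inv_mem h3
      have : (((h * b⁻¹)⁻¹ * b⁻¹)⁻¹ : G) = b * h * b⁻¹ := by group
      rwa [this] at h4
    · intro hh u
      apply Subtype.ext
      funext i
      show h • u.1 i = u.1 i
      induction u.1 i using Quotient.inductionOn' with
      | h a =>
        show (QuotientGroup.mk (h * a) : G ⧸ Gc.sub i) = QuotientGroup.mk a
        rw [QuotientGroup.eq]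
        have h4 := inv_mem (((hLmem h).mp hh i) a⁻¹)
        have : ((a⁻¹ * h * a⁻¹⁻¹)⁻¹ : G) = (h * a)⁻¹ * a := by group
        rwa [this] at h4
  · -- part (b)
    intro hD
    haveI hfin : ∀ i, Finite (G ⧸ (Gc.sub i).normalCore) := by
      intro i
      haveI := Gc.finiteIndex i
      exact Subgroup.finite_quotient_of_finiteIndex (H := (Gc.sub i).normalCore)
    have hfree : ∀ g : G, (∃ u : InvLim Gc.sub, g • u = u) → g ∈ L := by
      rintro g ⟨u, hu⟩
      rw [hLmem]
      intro i
      obtain ⟨j, hj⟩ := exists_le_normalCore Gc.sub Gc.antitone hD i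
      have hthis := hcoord g u j hu
      obtain ⟨a, ha⟩ := QuotientGroup.mk_surjective (u.1 j)
      rw [← ha] at hthis
      have h2 : (QuotientGroup.mk (g * a) : G ⧸ Gc.sub j) = QuotientGroup.mk a := hthis
      have h3 : (g * a)⁻¹ * a ∈ (Gc.sub i).normalCore := hj (QuotientGroup.eq.mp h2)
      have h4 := (Subgroup.normalCore_normal (Gc.sub i)).conj_mem _ h3 a
      have h5 : (a * ((g * a)⁻¹ * a) * a⁻¹ : G) = g⁻¹ := by group
      rw [h5] at h4
      simpa using inv_mem h4
    refine ⟨hfree, ?_⟩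
    apply le_antisymm
    · -- K ≤ L : every element of K fixes the basepoint
      intro k hk
      apply hfree
      refine ⟨basepoint Gc.sub, ?_⟩
      apply Subtype.ext
      funext i
      show (QuotientGroup.mk (k * 1) : G ⧸ Gc.sub i) = QuotientGroup.mk 1
      rw [QuotientGroup.eq]
      have hki : k ∈ Gc.sub i := by
        rw [hK, Subgroup.mem_iInf] at hk; exact hk i
      have : ((k * 1)⁻¹ * 1 : G) = k⁻¹ := by group
      rw [this]
      exact inv_mem hki
    · -- L ≤ K
      rw [hLC, hK]
      exact le_iInf fun i => (iInf_le _ i).trans (Subgroup.normalCore_le _)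

end CantorChains
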